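/- arXiv:1002.1058 — 2 statements merged into one kernel-verified Lean document; each statement's English description precedes it below -/
import Mathlib

section
/- Let n ≥ 1, let Pₙ be the path graph on vertices Δ = {α₁,…,αₙ}, and let J₀ ⊆ Δ. Let μ denote the Möbius function of the finite lattice Λ*(Pₙ,J₀). Then for admissible subsets U ⊆ W: μ(U,W) = (−1)^{|W|−|U|} if the interval [U,W] is order-isomorphic to the Boolean lattice of all subsets of a set with |W| − |U| elements, and μ(U,W) = 0 otherwise. -/
/-!
The candidate value of `μ(U, W)` is `(-1)^{|W| - |U|}` when every set between `U` and `W` is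
admissible and `0` otherwise; it suffices to check that it satisfies the defining recursion,
i.e. that its sum over `U ⊆ V ⊆ W` vanishes for `U ⊂ W`. Some `d ∈ W \ U` lies outside `J₀` or
is adjacent to `U`, since otherwise the component in `W` of a vertex of `W \ U` would stay
inside `W \ U ⊆ J₀`. Inserting such a `d` into an admissible set containing `U` keeps it
admissible, so "all sets between `U` and `V` are admissible" does not change under
`V ↦ V ∪ {d}`, and this toggle cancels the terms of the sum in pairs.

Finally `[U, W]` sits inside the Boolean interval of all finsets between `U` and `W`, which has
`2^{|W| - |U|}` elements; so it is Boolean of rank `|W| - |U|` exactly when it is all of it.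
-/

open SimpleGraph Finset

/-- `ReachIn G U a b` : `b` is reachable from `a` within the subgraph of `G`
induced on the vertex set `U`. -/
def ReachIn {n : ℕ} (G : SimpleGraph (Fin n)) (U : Finset (Fin n)) (a b : Fin n) : Prop :=
  Relation.ReflTransGen (fun x y => G.Adj x y ∧ x ∈ U ∧ y ∈ U) a b

/-- `U` is admissible (with respect to `J₀`) if no connected component of the
subgraph of `G` induced on `U` is entirely contained in `J₀`: every component
contains a vertex outside `J₀`. -/
def Admissible {n : ℕ} (G : SimpleGraph (Fin n)) (J₀ U : Finset (Fin n)) : Prop :=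
  ∀ a ∈ U, ∃ b, ReachIn G U a b ∧ b ∉ J₀

/-- A subset `A` is connected if the induced subgraph on `A` is connected. -/
def ConnIn {n : ℕ} (G : SimpleGraph (Fin n)) (A : Finset (Fin n)) : Prop :=
  ∀ a ∈ A, ∀ b ∈ A, ReachIn G A a b

theorem ReachIn.mono {n : ℕ} {G : SimpleGraph (Fin n)} {U V : Finset (Fin n)} (h : U ⊆ V)
    {a b : Fin n} (hr : ReachIn G U a b) : ReachIn G V a b :=
  by
  unfold ReachIn at *
  induction hr with
  | refl => exact Relation.ReflTransGen.refl
  | tail _ hxy ih => exact ih.tail ⟨hxy.1, h hxy.2.1, h hxy.2.2⟩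

theorem admissible_empty {n : ℕ} (G : SimpleGraph (Fin n)) (J₀ : Finset (Fin n)) :
    Admissible G J₀ ∅ := fun a ha => absurd ha (Finset.notMem_empty a)

theorem admissible_union {n : ℕ} {G : SimpleGraph (Fin n)} {J₀ U V : Finset (Fin n)}
    (hU : Admissible G J₀ U) (hV : Admissible G J₀ V) : Admissible G J₀ (U ∪ V) := by
  intro a ha
  rcases Finset.mem_union.mp ha with h | h
  · obtain ⟨b, hb, hbJ⟩ := hU a h
    exact ⟨b, hb.mono Finset.subset_union_left, hbJ⟩
  · obtain ⟨b, hb, hbJ⟩ := hV a h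
    exact ⟨b, hb.mono Finset.subset_union_right, hbJ⟩

/-- `Λ*(G, J₀)` : the poset of admissible subsets, ordered by inclusion. -/
def CrossSection {n : ℕ} (G : SimpleGraph (Fin n)) (J₀ : Finset (Fin n)) : Type :=
  {U : Finset (Fin n) // Admissible G J₀ U}

namespace CrossSection

variable {n : ℕ} {G : SimpleGraph (Fin n)} {J₀ : Finset (Fin n)}

instance : PartialOrder (CrossSection G J₀) :=
  inferInstanceAs (PartialOrder {U : Finset (Fin n) // Admissible G J₀ U})

instance : DecidableEq (CrossSection G J₀) :=
  inferInstanceAs (DecidableEq {U : Finset (Fin n) // Admissible G J₀ U})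

noncomputable instance : Fintype (CrossSection G J₀) :=
  Fintype.ofInjective (Subtype.val : CrossSection G J₀ → Finset (Fin n)) Subtype.val_injective

open Classical in
/-- The underlying set of the meet of two admissible sets: the largest admissible
subset contained in the intersection. -/
noncomputable def meetFinset (G : SimpleGraph (Fin n)) (J₀ : Finset (Fin n))
    (U V : Finset (Fin n)) : Finset (Fin n) :=
  ((U ∩ V).powerset.filter (fun W => Admissible G J₀ W)).sup id

theorem admissible_sup {s : Finset (Finset (Fin n))}
    (h : ∀ W ∈ s, Admissible G J₀ W) : Admissible G J₀ (s.sup id) :=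
  Finset.sup_induction (by simpa using admissible_empty G J₀)
    (fun a ha b hb => by simpa using admissible_union ha hb) h

theorem admissible_meetFinset (G : SimpleGraph (Fin n)) (J₀ U V : Finset (Fin n)) :
    Admissible G J₀ (meetFinset G J₀ U V) := by
  classical
  exact admissible_sup (fun W hW => (Finset.mem_filter.mp hW).2)

theorem meetFinset_subset_left (G : SimpleGraph (Fin n)) (J₀ U V : Finset (Fin n)) :
    meetFinset G J₀ U V ≤ U := by
  classical
  unfold meetFinset
  refine Finset.sup_le (fun W hW => ?_)
  have := Finset.mem_powerset.mp (Finset.mem_filter.mp hW).1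
  exact fun x hx => (Finset.mem_inter.mp (this hx)).1

theorem meetFinset_subset_right (G : SimpleGraph (Fin n)) (J₀ U V : Finset (Fin n)) :
    meetFinset G J₀ U V ≤ V := by
  classical
  unfold meetFinset
  refine Finset.sup_le (fun W hW => ?_)
  have := Finset.mem_powerset.mp (Finset.mem_filter.mp hW).1
  exact fun x hx => (Finset.mem_inter.mp (this hx)).2

theorem subset_meetFinset {G : SimpleGraph (Fin n)} {J₀ U V W : Finset (Fin n)}
    (hW : Admissible G J₀ W) (h1 : W ⊆ U) (h2 : W ⊆ V) : W ≤ meetFinset G J₀ U V := by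
  classical
  unfold meetFinset
  exact Finset.le_sup (f := id)
    (Finset.mem_filter.mpr ⟨Finset.mem_powerset.mpr (Finset.subset_inter h1 h2), hW⟩)

noncomputable instance : Lattice (CrossSection G J₀) :=
  { (inferInstance : PartialOrder (CrossSection G J₀)) with
    sup := fun U V => ⟨U.1 ∪ V.1, admissible_union U.2 V.2⟩
    le_sup_left := fun U V => show U.1 ⊆ U.1 ∪ V.1 from Finset.subset_union_left
    le_sup_right := fun U V => show V.1 ⊆ U.1 ∪ V.1 from Finset.subset_union_right
    sup_le := fun U V W h1 h2 => show U.1 ∪ V.1 ⊆ W.1 from Finset.union_subset h1 h2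
    inf := fun U V => ⟨meetFinset G J₀ U.1 V.1, admissible_meetFinset G J₀ U.1 V.1⟩
    inf_le_left := fun U V => meetFinset_subset_left G J₀ U.1 V.1
    inf_le_right := fun U V => meetFinset_subset_right G J₀ U.1 V.1
    le_inf := fun W U V h1 h2 => subset_meetFinset W.2 h1 h2 }

instance : OrderBot (CrossSection G J₀) where
  bot := ⟨∅, admissible_empty G J₀⟩
  bot_le := fun U => show (∅ : Finset (Fin n)) ⊆ U.1 from Finset.empty_subset _

@[simp] theorem sup_val (U V : CrossSection G J₀) : (U ⊔ V).1 = U.1 ∪ V.1 := rfl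

@[simp] theorem inf_val (U V : CrossSection G J₀) : (U ⊓ V).1 = meetFinset G J₀ U.1 V.1 := rfl

end CrossSection

namespace Finset

variable {α M : Type*} [DecidableEq α] [AddCommGroup M]

theorem sum_powerset_eq_zero_of_insert_eq_neg {s : Finset α} {a : α} (ha : a ∈ s)
    (f : Finset α → M) (h : ∀ u ⊆ s.erase a, f (insert a u) = -f u) :
    ∑ u ∈ s.powerset, f u = 0 := by
  rw [← insert_erase ha, sum_powerset_insert (notMem_erase a s), ← sum_add_distrib]
  exact sum_eq_zero fun u hu => by rw [h u (mem_powerset.1 hu), add_neg_cancel]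

theorem sum_Icc_eq_sum_powerset_sdiff {s t : Finset α} (hst : s ⊆ t) (f : Finset α → M) :
    ∑ v ∈ Icc s t, f v = ∑ u ∈ (t \ s).powerset, f (s ∪ u) := by
  rw [Icc_eq_image_powerset hst, sum_image]
  intro u hu v hv huv
  have hsdiff {w} (hw : w ∈ (t \ s).powerset) : (s ∪ w) \ s = w :=
    union_sdiff_cancel_left (disjoint_of_subset_right (mem_powerset.1 hw) disjoint_sdiff)
  rw [← hsdiff hu, ← hsdiff hv]
  exact congrArg (· \ s) huv

theorem sum_Icc_eq_zero_of_insert_eq_neg {s t : Finset α} {a : α} (hst : s ⊆ t)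
    (ha : a ∈ t \ s) (f : Finset α → M)
    (h : ∀ v ∈ Icc s (t.erase a), f (insert a v) = -f v) :
    ∑ v ∈ Icc s t, f v = 0 := by
  rw [sum_Icc_eq_sum_powerset_sdiff hst]
  refine sum_powerset_eq_zero_of_insert_eq_neg ha _ fun u hu => ?_
  rw [union_insert, h _ (by grind)]

def orderIsoIccSdiff {s t : Finset α} (hst : s ⊆ t) : Set.Icc s t ≃o Finset ↥(t \ s) where
  toFun v := (v.1 \ s).subtype (· ∈ t \ s)
  invFun u := ⟨s ∪ u.map (Function.Embedding.subtype _), subset_union_left,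
    union_subset hst fun x hx => by
      obtain ⟨y, -, rfl⟩ := mem_map.1 hx
      exact (mem_sdiff.1 y.2).1⟩
  left_inv v := by
    ext x
    have hsv : s ⊆ v.1 := v.2.1
    have hvt : v.1 ⊆ t := v.2.2
    simp only [subtype_map, mem_sdiff, mem_union, mem_filter]
    grind
  right_inv u := by
    ext x
    have := (mem_sdiff.1 x.2).2
    simp only [mem_subtype, mem_sdiff, mem_union, mem_map, Function.Embedding.subtype_apply,
      SetLike.coe_eq_coe, exists_eq_right]
    tauto
  map_rel_iff' {v w} := by
    have hvt : v.1 ⊆ t := v.2.2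
    have hsw : s ⊆ w.1 := w.2.1
    rw [← Subtype.coe_le_coe]
    simp only [Equiv.coe_fn_mk, subset_iff, mem_subtype, mem_sdiff, Subtype.forall]
    grind

noncomputable def orderIsoIccFin {s t : Finset α} (hst : s ⊆ t) :
    Set.Icc s t ≃o Finset (Fin (#t - #s)) :=
  (orderIsoIccSdiff hst).trans
    { ((t \ s).equivFin.trans (finCongr (card_sdiff_of_subset hst))).finsetCongr with
      map_rel_iff' := by simp }

end Finset

open scoped Classical in
theorem eq_of_forall_lt_eq_neg_sum {α M : Type*} [PartialOrder α] [Fintype α] [AddCommGroup M]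
    {x : α} {f g : α → M} (hx : f x = g x)
    (hf : ∀ y, x < y → f y = -∑ z ∈ univ.filter (fun z => x ≤ z ∧ z < y), f z)
    (hg : ∀ y, x < y → g y = -∑ z ∈ univ.filter (fun z => x ≤ z ∧ z < y), g z)
    {y : α} (hxy : x ≤ y) : f y = g y := by
  induction y using WellFoundedLT.induction with
  | _ y ih =>
    rcases hxy.eq_or_lt with rfl | hlt
    · exact hx
    rw [hf y hlt, hg y hlt]
    congr 1
    refine sum_congr rfl fun z hz => ?_
    rw [mem_filter] at hz
    exact ih z hz.2.2 hz.2.1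

section

variable {n : ℕ} {G : SimpleGraph (Fin n)} {J₀ : Finset (Fin n)}

theorem Admissible.insert {V : Finset (Fin n)} (hV : Admissible G J₀ V) {d : Fin n}
    (hd : d ∉ J₀ ∨ ∃ u ∈ V, G.Adj d u) : Admissible G J₀ (insert d V) := by
  intro a ha
  rcases mem_insert.1 ha with rfl | haV
  · rcases hd with hd | ⟨u, hu, hadj⟩
    · exact ⟨a, .refl, hd⟩
    · obtain ⟨b, hb, hbJ⟩ := hV u hu
      refine ⟨b, .head ⟨hadj, mem_insert_self _ _, mem_insert_of_mem hu⟩ ?_, hbJ⟩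
      exact hb.mono (subset_insert _ _)
  · obtain ⟨b, hb, hbJ⟩ := hV a haV
    exact ⟨b, hb.mono (subset_insert _ _), hbJ⟩

theorem exists_mem_sdiff_notMem_or_adj {U W : Finset (Fin n)} (hW : Admissible G J₀ W)
    (hUW : U ⊂ W) : ∃ d ∈ W \ U, d ∉ J₀ ∨ ∃ u ∈ U, G.Adj d u := by
  by_contra! hcon
  obtain ⟨d₀, hd₀⟩ := sdiff_nonempty.2 hUW.2
  have hreach : ∀ b, ReachIn G W d₀ b → b ∈ W \ U := by
    intro b hb
    induction hb with
    | refl => exact hd₀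
    | tail _ hstep ih =>
      obtain ⟨hadj, -, hbW⟩ := hstep
      exact mem_sdiff.2 ⟨hbW, fun hbU => (hcon _ ih).2 _ hbU hadj⟩
  obtain ⟨b, hb, hbJ⟩ := hW d₀ (mem_sdiff.1 hd₀).1
  exact hbJ (hcon b (hreach b hb)).1

def AdmissibleBetween (G : SimpleGraph (Fin n)) (J₀ U W : Finset (Fin n)) : Prop :=
  ∀ V ∈ Set.Icc U W, Admissible G J₀ V

theorem admissibleBetween_insert_iff {U V : Finset (Fin n)} {d : Fin n} (hdU : d ∉ U)
    (hd : d ∉ J₀ ∨ ∃ u ∈ U, G.Adj d u) :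
    AdmissibleBetween G J₀ U (insert d V) ↔ AdmissibleBetween G J₀ U V := by
  refine ⟨fun h X hX => h X ⟨hX.1, hX.2.trans (subset_insert d V)⟩, fun h X hX => ?_⟩
  by_cases hdX : d ∈ X
  · have hUX : U ⊆ X.erase d := subset_erase.2 ⟨hX.1, hdU⟩
    rw [← insert_erase hdX]
    exact (h _ ⟨hUX, subset_insert_iff.1 hX.2⟩).insert
      (hd.imp_right fun ⟨u, hu, hadj⟩ => ⟨u, hUX hu, hadj⟩)
  · exact h X ⟨hX.1, (subset_insert_iff_of_notMem hdX).1 hX.2⟩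

open Classical in
noncomputable def mobiusFormula (G : SimpleGraph (Fin n)) (J₀ U W : Finset (Fin n)) : ℤ :=
  if AdmissibleBetween G J₀ U W then (-1) ^ (#W - #U) else 0

theorem mobiusFormula_insert {U V : Finset (Fin n)} {d : Fin n} (hdU : d ∉ U)
    (hd : d ∉ J₀ ∨ ∃ u ∈ U, G.Adj d u) (hUV : U ⊆ V) (hdV : d ∉ V) :
    mobiusFormula G J₀ U (insert d V) = -mobiusFormula G J₀ U V := by
  have hcard : #(insert d V) - #U = #V - #U + 1 := by
    rw [card_insert_of_notMem hdV]
    have := card_le_card hUV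
    omega
  rw [mobiusFormula, mobiusFormula, hcard, pow_succ]
  by_cases h : AdmissibleBetween G J₀ U V <;> simp [h, admissibleBetween_insert_iff hdU hd]

theorem sum_Icc_mobiusFormula_eq_zero {U W : Finset (Fin n)} (hW : Admissible G J₀ W)
    (hUW : U ⊂ W) : ∑ V ∈ Icc U W, mobiusFormula G J₀ U V = 0 := by
  obtain ⟨d, hd, hcone⟩ := exists_mem_sdiff_notMem_or_adj hW hUW
  refine sum_Icc_eq_zero_of_insert_eq_neg hUW.1 hd _ fun V hV => ?_
  rw [mem_Icc] at hV
  exact mobiusFormula_insert (mem_sdiff.1 hd).2 hcone hV.1 fun h => notMem_erase d W (hV.2 h)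

theorem mobiusFormula_self {U : Finset (Fin n)} (hU : Admissible G J₀ U) :
    mobiusFormula G J₀ U U = 1 := by
  have : AdmissibleBetween G J₀ U U := fun V hV => le_antisymm hV.2 hV.1 ▸ hU
  simp [mobiusFormula, this]

namespace CrossSection

open scoped Classical in
theorem sum_filter_lt_mobiusFormula (U W : CrossSection G J₀) :
    ∑ z ∈ univ.filter (fun z => U ≤ z ∧ z < W), mobiusFormula G J₀ U.1 z.1 =
      ∑ V ∈ Ico U.1 W.1, mobiusFormula G J₀ U.1 V := by
  refine sum_bij_ne_zero (fun z _ _ => z.1) ?_ ?_ ?_ fun _ _ _ => rfl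
  · intro z hz _
    rw [mem_filter] at hz
    exact mem_Ico.2 hz.2
  · intro z _ _ z' _ _ h
    exact Subtype.ext h
  · intro V hV hne
    have hadm : AdmissibleBetween G J₀ U.1 V := by
      by_contra h
      simp [mobiusFormula, h] at hne
    rw [mem_Ico] at hV
    exact ⟨⟨V, hadm V ⟨hV.1, le_rfl⟩⟩, mem_filter.2 ⟨mem_univ _, hV⟩, hne, rfl⟩

open scoped Classical in
theorem mobiusFormula_eq_neg_sum {U W : CrossSection G J₀} (h : U < W) :
    mobiusFormula G J₀ U.1 W.1 =
      -∑ z ∈ univ.filter (fun z => U ≤ z ∧ z < W), mobiusFormula G J₀ U.1 z.1 := by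
  rw [sum_filter_lt_mobiusFormula, eq_neg_iff_add_eq_zero,
    ← sum_insert right_notMem_Ico, Ico_insert_right (a := U.1) h.le]
  exact sum_Icc_mobiusFormula_eq_zero W.2 h

open scoped Classical in
theorem eq_mobiusFormula {μ : CrossSection G J₀ → CrossSection G J₀ → ℤ}
    (hrefl : ∀ x, μ x x = 1)
    (hrec : ∀ x y, x < y → μ x y = -∑ z ∈ univ.filter (fun z => x ≤ z ∧ z < y), μ x z)
    {U W : CrossSection G J₀} (hUW : U ≤ W) : μ U W = mobiusFormula G J₀ U.1 W.1 :=
  eq_of_forall_lt_eq_neg_sum (by rw [hrefl, mobiusFormula_self U.2]) (hrec U)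
    (fun _ => mobiusFormula_eq_neg_sum) hUW

theorem nonempty_orderIso_Icc_iff {U W : CrossSection G J₀} (hUW : U ≤ W) :
    Nonempty (Set.Icc U W ≃o Finset (Fin (#W.1 - #U.1))) ↔
      AdmissibleBetween G J₀ U.1 W.1 := by
  let ι : Set.Icc U W → Set.Icc U.1 W.1 := fun V => ⟨V.1.1, V.2⟩
  have hι : Function.Injective ι := fun V V' h => by
    have : V.1.1 = V'.1.1 := congrArg (fun X : Set.Icc U.1 W.1 => X.1) h
    exact Subtype.ext (Subtype.ext this)
  have hsurj : Function.Surjective ι ↔ AdmissibleBetween G J₀ U.1 W.1 := by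
    refine ⟨fun h V hV => ?_, fun h V => ⟨⟨⟨V.1, h V.1 V.2⟩, V.2⟩, rfl⟩⟩
    obtain ⟨X, hX⟩ := h ⟨V, hV⟩
    have : X.1.1 = V := congrArg Subtype.val hX
    exact this ▸ X.1.2
  rw [← hsurj]
  constructor
  · rintro ⟨e⟩
    refine ((Nat.bijective_iff_injective_and_card ι).2 ⟨hι, ?_⟩).2
    exact Nat.card_congr (e.trans (Finset.orderIsoIccFin hUW).symm).toEquiv
  · intro h
    exact ⟨({ Equiv.ofBijective ι ⟨hι, h⟩ with map_rel_iff' := Iff.rfl } :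
      Set.Icc U W ≃o Set.Icc U.1 W.1).trans (Finset.orderIsoIccFin hUW)⟩

end CrossSection

end

open scoped Classical in
theorem stmt_7_general (n : ℕ) (J₀ : Finset (Fin n))
    (μ : CrossSection (pathGraph n) J₀ → CrossSection (pathGraph n) J₀ → ℤ)
    (hrefl : ∀ x, μ x x = 1)
    (hrec : ∀ x y, x < y →
      μ x y = - ∑ z ∈ Finset.univ.filter (fun z => x ≤ z ∧ z < y), μ x z)
    (U W : CrossSection (pathGraph n) J₀) (hUW : U ≤ W) :
    μ U W =
      if Nonempty (Set.Icc U W ≃o Finset (Fin (W.1.card - U.1.card))) then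
        (-1) ^ (W.1.card - U.1.card)
      else 0 := by
  rw [CrossSection.eq_mobiusFormula hrefl hrec hUW, mobiusFormula]
  exact if_congr (CrossSection.nonempty_orderIso_Icc_iff hUW).symm rfl rfl

open scoped Classical in
theorem stmt_7 (n : ℕ) (hn : 1 ≤ n) (J₀ : Finset (Fin n))
    (μ : CrossSection (pathGraph n) J₀ → CrossSection (pathGraph n) J₀ → ℤ)
    (hrefl : ∀ x, μ x x = 1)
    (hnle : ∀ x y, ¬ x ≤ y → μ x y = 0)
    (hrec : ∀ x y, x < y →
      μ x y = - ∑ z ∈ Finset.univ.filter (fun z => x ≤ z ∧ z < y), μ x z)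
    (U W : CrossSection (pathGraph n) J₀) (hUW : U ≤ W) :
    μ U W =
      if Nonempty (Set.Icc U W ≃o Finset (Fin (W.1.card - U.1.card))) then
        (-1) ^ (W.1.card - U.1.card)
      else 0 :=
  stmt_7_general n J₀ μ hrefl hrec U W hUW
end

section
/- Let n ≥ 1, let Pₙ be the path graph on vertices Δ = {α₁,…,αₙ}, and let J₀ ⊆ Δ. The following are equivalent: (1) Λ*(Pₙ,J₀) is closed under intersections, i.e. it is a sublattice (with respect to union and intersection) of the Boolean lattice of all subsets of Δ; (2) Λ*(Pₙ,J₀) is a distributive lattice; (3) Δ − J₀ is a connected subset of Pₙ (i.e. the subgraph of Pₙ induced on Δ − J₀ is connected). -/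
open SimpleGraph Finset

/-!
On a path, `b` is reachable from `a ∈ U` inside `U` exactly when the interval `[[a, b]]` lies
in `U`; so `U` is admissible iff every `a ∈ U` sees some `b ∉ J₀` through an interval inside
`U`, and `Δ - J₀` is connected iff it is order-convex.

If `Δ - J₀` is convex and `a ∈ U ∩ V`, the witnesses `b` (for `U`) and `c` (for `V`) cannot lie
on opposite sides of `a ∈ J₀`, so the one nearer to `a` serves for `U ∩ V`. Hence meets are
intersections and distributivity is inherited from the Boolean lattice.

If `a < c < b` with `a, b ∉ J₀` and `c ∈ J₀`, take `X = [a, c]`, `Y = [c, b]` and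
`Z = [a, b] - {c}`: then `X ⊓ (Y ⊔ Z) = X ∋ c`, while `c` lies neither in `X ⊓ Z ⊆ Z` nor in
the admissible subset `X ⊓ Y` of `{c}`.
-/

variable {n : ℕ}

theorem ReachIn.symm {G : SimpleGraph (Fin n)} {U : Finset (Fin n)} {a b : Fin n}
    (h : ReachIn G U a b) : ReachIn G U b a :=
  Relation.ReflTransGen.mono (fun _ _ hxy => ⟨hxy.1.symm, hxy.2.2, hxy.2.1⟩) _ _
    (Relation.ReflTransGen.swap _ _ h)

theorem Admissible.notMem_of_subset_singleton {G : SimpleGraph (Fin n)}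
    {J₀ W : Finset (Fin n)} {c : Fin n} (hW : Admissible G J₀ W) (hsub : W ⊆ {c}) (hc : c ∈ J₀) :
    c ∉ W := fun hcW => by
  obtain ⟨d, hcd, hdJ⟩ := hW c hcW
  rcases hcd.cases_tail with rfl | ⟨_, _, hstep⟩
  · exact hdJ hc
  · exact hdJ (mem_singleton.mp (hsub hstep.2.2) ▸ hc)

theorem Set.mem_uIcc_or_mem_uIcc_or_mem_uIcc {α : Type*} [LinearOrder α] (a b c : α) :
    b ∈ Set.uIcc a c ∨ c ∈ Set.uIcc a b ∨ a ∈ Set.uIcc b c := by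
  simp only [Set.mem_uIcc]
  rcases le_total a b with hab | hab <;> rcases le_total b c with hbc | hbc <;>
    rcases le_total a c with hac | hac <;> tauto

theorem Set.OrdConnected.exists_uIcc_subset_inter {α : Type*} [LinearOrder α] {K U V : Set α}
    (hK : K.OrdConnected) {a b c : α} (hb : b ∈ K) (hc : c ∈ K) (hU : Set.uIcc a b ⊆ U)
    (hV : Set.uIcc a c ⊆ V) : ∃ d ∈ K, Set.uIcc a d ⊆ U ∩ V := by
  rcases Set.mem_uIcc_or_mem_uIcc_or_mem_uIcc a b c with hb' | hc' | ha'
  · exact ⟨b, hb, Set.subset_inter hU ((Set.uIcc_subset_uIcc_left hb').trans hV)⟩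
  · exact ⟨c, hc, Set.subset_inter ((Set.uIcc_subset_uIcc_left hc').trans hU) hV⟩
  · refine ⟨a, hK.uIcc_subset hb hc ha', ?_⟩
    rw [Set.uIcc_self, Set.singleton_subset_iff]
    exact ⟨hU Set.left_mem_uIcc, hV Set.left_mem_uIcc⟩

section PathGraph

variable {U : Finset (Fin n)} {a b : Fin n}

theorem reachIn_pathGraph_of_Icc_subset (hab : a ≤ b) (h : Set.Icc a b ⊆ U) :
    ReachIn (pathGraph n) U a b := by
  suffices ∀ k, a.val ≤ k → ∀ hk : k < n, Set.Icc a ⟨k, hk⟩ ⊆ U →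
      ReachIn (pathGraph n) U a ⟨k, hk⟩ from this b hab b.isLt h
  intro k hak
  induction k, hak using Nat.le_induction with
  | base => exact fun _ _ => .refl
  | succ k hak ih =>
    intro hk h
    have hk' : ⟨k, by omega⟩ ∈ Set.Icc a ⟨k + 1, hk⟩ :=
      ⟨Fin.le_def.mpr hak, Fin.le_def.mpr k.le_succ⟩
    exact (ih (by omega) fun c hc => h ⟨hc.1, hc.2.trans hk'.2⟩).tail
      ⟨pathGraph_adj.mpr (.inl rfl), h hk', h ⟨hk'.1.trans hk'.2, le_rfl⟩⟩

theorem reachIn_pathGraph_of_uIcc_subset (h : Set.uIcc a b ⊆ U) :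
    ReachIn (pathGraph n) U a b := by
  rcases le_total a b with hab | hba
  · exact reachIn_pathGraph_of_Icc_subset hab (Set.uIcc_of_le hab ▸ h)
  · exact (reachIn_pathGraph_of_Icc_subset hba (Set.uIcc_of_ge hba ▸ h)).symm

theorem ReachIn.uIcc_subset_of_pathGraph (ha : a ∈ U) (h : ReachIn (pathGraph n) U a b) :
    Set.uIcc a b ⊆ U := by
  induction h with
  | refl => simpa using ha
  | @tail b c _ hbc ih =>
    intro d hd
    by_cases hdc : d = c
    · exact hdc ▸ hbc.2.2
    · have hadj := pathGraph_adj.mp hbc.1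
      rw [Set.mem_uIcc] at hd
      exact ih (Set.mem_uIcc.mpr (by omega))

theorem admissible_pathGraph_iff {J₀ : Finset (Fin n)} :
    Admissible (pathGraph n) J₀ U ↔ ∀ a ∈ U, ∃ b ∉ J₀, Set.uIcc a b ⊆ U :=
  forall₂_congr fun _ ha => ⟨fun ⟨b, hab, hb⟩ => ⟨b, hb, hab.uIcc_subset_of_pathGraph ha⟩,
    fun ⟨b, hb, hab⟩ => ⟨b, reachIn_pathGraph_of_uIcc_subset hab, hb⟩⟩

theorem connIn_pathGraph_iff : ConnIn (pathGraph n) U ↔ (U : Set (Fin n)).OrdConnected := by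
  rw [Set.ordConnected_iff_uIcc_subset]
  exact forall₂_congr fun a ha => forall₂_congr fun b _ =>
    ⟨(·.uIcc_subset_of_pathGraph ha), reachIn_pathGraph_of_uIcc_subset⟩

theorem admissible_pathGraph_of_ordConnected {J₀ : Finset (Fin n)}
    (hU : (U : Set (Fin n)).OrdConnected) (hb : b ∈ U) (hbJ : b ∉ J₀) :
    Admissible (pathGraph n) J₀ U :=
  admissible_pathGraph_iff.mpr fun _ ha => ⟨b, hbJ, hU.uIcc_subset ha hb⟩

end PathGraph

namespace CrossSection

variable {J₀ : Finset (Fin n)}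

theorem inf_val_subset_inter {G : SimpleGraph (Fin n)} (U V : CrossSection G J₀) :
    (U ⊓ V).1 ⊆ U.1 ∩ V.1 :=
  subset_inter (meetFinset_subset_left ..) (meetFinset_subset_right ..)

theorem inf_val_of_admissible_inter {G : SimpleGraph (Fin n)} {U V : CrossSection G J₀}
    (h : Admissible G J₀ (U.1 ∩ V.1)) : (U ⊓ V).1 = U.1 ∩ V.1 :=
  (inf_val_subset_inter U V).antisymm (subset_meetFinset h inter_subset_left inter_subset_right)

theorem inf_sup_left_of_admissible_inter {G : SimpleGraph (Fin n)}
    (h : ∀ U V : CrossSection G J₀, Admissible G J₀ (U.1 ∩ V.1)) (x y z : CrossSection G J₀) :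
    x ⊓ (y ⊔ z) = x ⊓ y ⊔ x ⊓ z :=
  Subtype.ext <| by
    simp only [sup_val, inf_val_of_admissible_inter (h _ _)]
    exact inter_union_distrib_left ..

theorem inf_sup_left_ne {G : SimpleGraph (Fin n)} {x y z : CrossSection G J₀} {c : Fin n}
    (hc : c ∈ J₀) (hcx : c ∈ x.1) (hcz : c ∉ z.1) (hxy : x.1 ∩ y.1 ⊆ {c}) (hle : x ≤ y ⊔ z) :
    x ⊓ (y ⊔ z) ≠ x ⊓ y ⊔ x ⊓ z := by
  rw [inf_eq_left.mpr hle]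
  intro h
  rcases mem_union.mp (show c ∈ (x ⊓ y ⊔ x ⊓ z).1 from h ▸ hcx) with hcxy | hcxz
  · exact (x ⊓ y).2.notMem_of_subset_singleton ((inf_val_subset_inter x y).trans hxy) hc hcxy
  · exact hcz (meetFinset_subset_right _ _ _ _ hcxz)

theorem admissible_inter_of_ordConnected (hC : (↑(univ \ J₀) : Set (Fin n)).OrdConnected)
    {U V : Finset (Fin n)} (hU : Admissible (pathGraph n) J₀ U)
    (hV : Admissible (pathGraph n) J₀ V) : Admissible (pathGraph n) J₀ (U ∩ V) := by
  rw [admissible_pathGraph_iff] at *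
  intro a ha
  obtain ⟨b, hbJ, hab⟩ := hU a (mem_inter.mp ha).1
  obtain ⟨c, hcJ, hac⟩ := hV a (mem_inter.mp ha).2
  obtain ⟨d, hd, had⟩ :=
    hC.exists_uIcc_subset_inter (by simpa using hbJ) (by simpa using hcJ) hab hac
  exact ⟨d, by simpa using hd, by rwa [coe_inter]⟩

theorem ordConnected_of_inf_sup_left
    (h : ∀ x y z : CrossSection (pathGraph n) J₀, x ⊓ (y ⊔ z) = x ⊓ y ⊔ x ⊓ z) :
    (↑(univ \ J₀) : Set (Fin n)).OrdConnected := by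
  rw [Set.ordConnected_def]
  intro a ha b hb c hc
  by_contra hcJ
  simp only [coe_sdiff, coe_univ, Set.mem_sdiff, Set.mem_univ, true_and, mem_coe,
    not_not] at ha hb hcJ
  have hac : a < c := lt_of_le_of_ne hc.1 (by rintro rfl; exact ha hcJ)
  have hcb : c < b := lt_of_le_of_ne hc.2 (by rintro rfl; exact hb hcJ)
  let X : CrossSection (pathGraph n) J₀ := ⟨Icc a c, admissible_pathGraph_of_ordConnected
    (by rw [coe_Icc]; exact Set.ordConnected_Icc) (left_mem_Icc.mpr hc.1) ha⟩
  let Y : CrossSection (pathGraph n) J₀ := ⟨Icc c b, admissible_pathGraph_of_ordConnected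
    (by rw [coe_Icc]; exact Set.ordConnected_Icc) (right_mem_Icc.mpr hc.2) hb⟩
  let Z : CrossSection (pathGraph n) J₀ := ⟨Ico a c ∪ Ioc c b, admissible_union
    (admissible_pathGraph_of_ordConnected (by rw [coe_Ico]; exact Set.ordConnected_Ico)
      (left_mem_Ico.mpr hac) ha)
    (admissible_pathGraph_of_ordConnected (by rw [coe_Ioc]; exact Set.ordConnected_Ioc)
      (right_mem_Ioc.mpr hcb) hb)⟩
  refine inf_sup_left_ne (x := X) (y := Y) (z := Z) hcJ (right_mem_Icc.mpr hc.1) (by simp [Z])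
    (fun d hd => ?_) ?_ (h X Y Z)
  · simp only [X, Y, mem_inter, mem_Icc] at hd
    exact mem_singleton.mpr (le_antisymm hd.1.2 hd.2.1)
  · show Icc a c ⊆ Icc c b ∪ (Ico a c ∪ Ioc c b)
    intro d hd
    simp only [mem_union, mem_Icc, mem_Ico, mem_Ioc] at hd ⊢
    rcases hd.2.eq_or_lt with rfl | hdc
    · exact .inl ⟨le_rfl, hc.2⟩
    · exact .inr (.inl ⟨hd.1, hdc⟩)

end CrossSection

open CrossSection in
theorem stmt_8_general (n : ℕ) (J₀ : Finset (Fin n)) :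
    ((∀ U V : CrossSection (pathGraph n) J₀, Admissible (pathGraph n) J₀ (U.1 ∩ V.1)) ↔
      (∀ x y z : CrossSection (pathGraph n) J₀, x ⊓ (y ⊔ z) = (x ⊓ y) ⊔ (x ⊓ z))) ∧
    ((∀ x y z : CrossSection (pathGraph n) J₀, x ⊓ (y ⊔ z) = (x ⊓ y) ⊔ (x ⊓ z)) ↔
      ConnIn (pathGraph n) (Finset.univ \ J₀)) := by
  have closed_of_conn (hC : ConnIn (pathGraph n) (univ \ J₀))
      (U V : CrossSection (pathGraph n) J₀) : Admissible (pathGraph n) J₀ (U.1 ∩ V.1) :=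
    admissible_inter_of_ordConnected (connIn_pathGraph_iff.mp hC) U.2 V.2
  have conn_of_distrib
      (h : ∀ x y z : CrossSection (pathGraph n) J₀, x ⊓ (y ⊔ z) = x ⊓ y ⊔ x ⊓ z) :
      ConnIn (pathGraph n) (univ \ J₀) :=
    connIn_pathGraph_iff.mpr (ordConnected_of_inf_sup_left h)
  exact ⟨⟨inf_sup_left_of_admissible_inter, (closed_of_conn <| conn_of_distrib ·)⟩,
    ⟨conn_of_distrib, (inf_sup_left_of_admissible_inter <| closed_of_conn ·)⟩⟩

theorem stmt_8 (n : ℕ) (hn : 1 ≤ n) (J₀ : Finset (Fin n)) :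
    ((∀ U V : CrossSection (pathGraph n) J₀, Admissible (pathGraph n) J₀ (U.1 ∩ V.1)) ↔
      (∀ x y z : CrossSection (pathGraph n) J₀, x ⊓ (y ⊔ z) = (x ⊓ y) ⊔ (x ⊓ z))) ∧
    ((∀ x y z : CrossSection (pathGraph n) J₀, x ⊓ (y ⊔ z) = (x ⊓ y) ⊔ (x ⊓ z)) ↔
      ConnIn (pathGraph n) (Finset.univ \ J₀)) :=
  stmt_8_general n J₀
end
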